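/- arXiv:math/0101021 — 4 statements merged into one kernel-verified Lean document; each statement's English description precedes it below -/
import Mathlib

section
/- Let A be a commutative semiring whose addition is idempotent (a ⊕ a = a for all a) and which satisfies the cancellation condition: for all a, b, c ∈ A with a ≠ 𝟘, a ⊙ b = a ⊙ c implies b = c. Then Newton's binomial formula holds in the degenerate form (a ⊕ b)ⁿ = aⁿ ⊕ bⁿ for all a, b ∈ A and all natural numbers n ≥ 1. -/
/-!
Order the semiring by `x ≤ y ↔ x + y = y`, so that `+` is the join and multiplication is monotone;
cancellation by `c ≠ 0` then also reflects the order. Always `aⁿ + bⁿ ≤ (a + b)ⁿ`. The square case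
follows by cancelling `a + b` from `(a + b)³ = (a + b)(a² + b²)`, hence the identity holds for all
exponents `2ᵏ`. It descends from `n + 1` to `n`, because
`(a + b)(a + b)ⁿ = aⁿ⁺¹ + bⁿ⁺¹ ≤ (a + b)(aⁿ + bⁿ)`, and `2ⁿ ≥ n`.
-/

section IdemSemiring

variable {α : Type*} [IdemSemiring α]

theorem pow_add_pow_le_add_pow (a b : α) (n : ℕ) : a ^ n + b ^ n ≤ (a + b) ^ n :=
  add_le (pow_le_pow_left' le_self_add n) (pow_le_pow_left' le_add_self n)

theorem le_of_mul_le_mul_left_of_ne_zero [IsLeftCancelMulZero α] {c x y : α} (hc : c ≠ 0)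
    (h : c * x ≤ c * y) : x ≤ y := by
  rw [← add_eq_right_iff_le] at h ⊢
  exact mul_left_cancel₀ hc (by rw [mul_add, h])

end IdemSemiring

namespace IdemCommSemiring

variable {α : Type*} [IdemCommSemiring α]

theorem add_pow_three_eq_mul_sq_add_sq (a b : α) : (a + b) ^ 3 = (a + b) * (a ^ 2 + b ^ 2) := by
  calc (a + b) ^ 3 = a ^ 3 + 3 * (a ^ 2 * b) + 3 * (a * b ^ 2) + b ^ 3 := by ring
    _ = (a + b) * (a ^ 2 + b ^ 2) := by rw [ofNat_eq_one]; ring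

variable [IsLeftCancelMulZero α]

theorem add_sq (a b : α) : (a + b) ^ 2 = a ^ 2 + b ^ 2 := by
  by_cases hab : a + b = 0
  · obtain ⟨rfl, rfl⟩ := add_eq_zero.1 hab
    simp
  · refine mul_left_cancel₀ hab ?_
    rw [← pow_succ', add_pow_three_eq_mul_sq_add_sq]

theorem add_pow_two_pow (a b : α) (k : ℕ) : (a + b) ^ 2 ^ k = a ^ 2 ^ k + b ^ 2 ^ k := by
  induction k with
  | zero => simp
  | succ k ih => simp only [pow_succ 2, pow_mul, ih, add_sq]

theorem add_pow_of_add_pow_succ {a b : α} {n : ℕ}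
    (h : (a + b) ^ (n + 1) = a ^ (n + 1) + b ^ (n + 1)) : (a + b) ^ n = a ^ n + b ^ n := by
  by_cases hab : a + b = 0
  · obtain ⟨rfl, rfl⟩ := add_eq_zero.1 hab
    rw [add_idem, add_idem]
  refine le_antisymm (le_of_mul_le_mul_left_of_ne_zero hab ?_) (pow_add_pow_le_add_pow a b n)
  calc (a + b) * (a + b) ^ n = a * a ^ n + b * b ^ n := by rw [← pow_succ', h, pow_succ', pow_succ']
    _ ≤ (a + b) * (a ^ n + b ^ n) := by
      rw [add_mul, mul_add, mul_add]
      exact add_le_add le_self_add le_add_self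

theorem add_pow_of_le {a b : α} {n m : ℕ} (hnm : n ≤ m)
    (h : (a + b) ^ m = a ^ m + b ^ m) : (a + b) ^ n = a ^ n + b ^ n := by
  induction hnm using Nat.decreasingInduction with
  | self => exact h
  | of_succ k _ ih => exact add_pow_of_add_pow_succ ih

theorem add_pow (a b : α) (n : ℕ) : (a + b) ^ n = a ^ n + b ^ n :=
  add_pow_of_le Nat.lt_two_pow_self.le (add_pow_two_pow a b n)

end IdemCommSemiring

/-- In a commutative semiring with idempotent addition satisfying the
cancellation condition, Newton's binomial formula holds in the degenerate form
`(a + b)^n = a^n + b^n` for all `n ≥ 1`. -/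
theorem idempotent_binomial_cancellation {A : Type*} [CommSemiring A]
    (hidem : ∀ a : A, a + a = a)
    (hcancel : ∀ a b c : A, a ≠ 0 → a * b = a * c → b = c) :
    ∀ (a b : A) (n : ℕ), 1 ≤ n → (a + b) ^ n = a ^ n + b ^ n := by
  let : IdemCommSemiring A := { IdemSemiring.ofSemiring hidem with mul_comm := mul_comm }
  have : IsLeftCancelMulZero A := ⟨fun ha _ _ => hcancel _ _ _ ha⟩
  exact fun a b n _ => IdemCommSemiring.add_pow a b n
end

section
/- Let h > 0 and let w₁, w₂ : ℝ × ℝ → ℝ be C² functions (arguments (t, x)) each satisfying the integrated Burgers equation ∂w/∂t + (1/2)(∂w/∂x)² − (h/2)·∂²w/∂x² = 0 at every point. Then for any constants λ₁, λ₂ ∈ ℝ, the generalized linear combination w := (λ₁ ⊙ w₁) ⊕_h (λ₂ ⊙ w₂), given explicitly by w(t, x) = −h·ln( e^{−(λ₁ + w₁(t,x))/h} + e^{−(λ₂ + w₂(t,x))/h} ), also satisfies the integrated Burgers equation at every point. (This is the superposition principle: the Burgers equation is linear over the deformed operations w₁ ⊕_h w₂ = −h·ln(e^{−w₁/h} + e^{−w₂/h})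 and λ ⊙ w = λ + w.) -/
/-!
Cole–Hopf: the substitution `u = exp (-w / h)` turns the integrated Burgers equation into the
heat equation `∂u/∂t = (h/2)·∂²u/∂x²`, since `heatOp h u = -(u / h) · burgersOp h w`.
Under this substitution `⊙` becomes multiplication by `exp (-λ / h)` and `⊕_h` becomes `+`,
so the generalized linear combination of two Burgers solutions corresponds to an ordinary linear
combination of two heat solutions, which solves the (linear) heat equation.
-/

open Real

noncomputable def burgersOp (h : ℝ) (w : ℝ → ℝ → ℝ) (t x : ℝ) : ℝ :=
  deriv (fun s => w s x) t + (1 / 2) * (deriv (fun y => w t y) x) ^ 2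
    - (h / 2) * deriv (deriv (fun y => w t y)) x

noncomputable def heatOp (h : ℝ) (u : ℝ → ℝ → ℝ) (t x : ℝ) : ℝ :=
  deriv (fun s => u s x) t - (h / 2) * deriv (deriv (fun y => u t y)) x

noncomputable def deformedAdd (h a b : ℝ) : ℝ :=
  -h * log (exp (-a / h) + exp (-b / h))

section Slices

variable {𝕜 E F G : Type*} [NontriviallyNormedField 𝕜]
  [NormedAddCommGroup E] [NormedSpace 𝕜 E] [NormedAddCommGroup F] [NormedSpace 𝕜 F]
  [NormedAddCommGroup G] [NormedSpace 𝕜 G]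
  {n : WithTop ℕ∞} {f : E → F → G}

theorem ContDiff.slice_left (hf : ContDiff 𝕜 n (fun p : E × F => f p.1 p.2)) (y : F) :
    ContDiff 𝕜 n (fun x => f x y) :=
  hf.comp (contDiff_prodMk_left y)

theorem ContDiff.slice_right (hf : ContDiff 𝕜 n (fun p : E × F => f p.1 p.2)) (x : E) :
    ContDiff 𝕜 n (fun y => f x y) :=
  hf.comp (contDiff_prodMk_right x)

end Slices

section DeformedAdd

variable {h : ℝ}

theorem exp_neg_deformedAdd_div (hh : h ≠ 0) (a b : ℝ) :
    exp (-deformedAdd h a b / h) = exp (-a / h) + exp (-b / h) := by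
  rw [deformedAdd, neg_mul, neg_neg, mul_div_cancel_left₀ _ hh,
    exp_log (add_pos (exp_pos _) (exp_pos _))]

theorem ContDiff.deformedAdd {E : Type*} [NormedAddCommGroup E] [NormedSpace ℝ E]
    {n : WithTop ℕ∞} {f g : E → ℝ} (hf : ContDiff ℝ n f) (hg : ContDiff ℝ n g) :
    ContDiff ℝ n (fun p => deformedAdd h (f p) (g p)) :=
  contDiff_const.mul <| ContDiff.log (by fun_prop) fun _ =>
    (add_pos (exp_pos _) (exp_pos _)).ne'

end DeformedAdd

section ColeHopf

variable {h : ℝ}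

theorem heatOp_linear_combination {u v : ℝ → ℝ → ℝ}
    (hu : ContDiff ℝ 2 (fun p : ℝ × ℝ => u p.1 p.2))
    (hv : ContDiff ℝ 2 (fun p : ℝ × ℝ => v p.1 p.2)) (a b t x : ℝ) :
    heatOp h (fun t x => a * u t x + b * v t x) t x
      = a * heatOp h u t x + b * heatOp h v t x := by
  have hux := (hu.slice_right t).differentiable two_ne_zero
  have hvx := (hv.slice_right t).differentiable two_ne_zero
  have hx : (deriv fun y => a * u t y + b * v t y)
      = fun y => a * deriv (fun y => u t y) y + b * deriv (fun y => v t y) y := by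
    funext y
    exact (((hux y).hasDerivAt.const_mul a).add ((hvx y).hasDerivAt.const_mul b)).deriv
  have hut := ((hu.slice_left x).differentiable two_ne_zero t).hasDerivAt
  have hvt := ((hv.slice_left x).differentiable two_ne_zero t).hasDerivAt
  have huxx := ((hu.slice_right t).differentiable_deriv_two x).hasDerivAt
  have hvxx := ((hv.slice_right t).differentiable_deriv_two x).hasDerivAt
  have ht : HasDerivAt (fun s => a * u s x + b * v s x)
      (a * deriv (fun s => u s x) t + b * deriv (fun s => v s x) t) t :=
    (hut.const_mul a).add (hvt.const_mul b)
  have hxx : HasDerivAt (fun y => a * deriv (fun y => u t y) y + b * deriv (fun y => v t y) y)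
      (a * deriv (deriv fun y => u t y) x + b * deriv (deriv fun y => v t y) x) x :=
    (huxx.const_mul a).add (hvxx.const_mul b)
  simp only [heatOp, hx, ht.deriv, hxx.deriv]
  ring

theorem heatOp_exp_neg_div (hh : h ≠ 0) {w : ℝ → ℝ → ℝ}
    (hw : ContDiff ℝ 2 (fun p : ℝ × ℝ => w p.1 p.2)) (t x : ℝ) :
    heatOp h (fun t x => exp (-w t x / h)) t x
      = -(exp (-w t x / h) / h) * burgersOp h w t x := by
  have hwx := (hw.slice_right t).differentiable two_ne_zero
  have hx : (deriv fun y => exp (-w t y / h))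
      = fun y => exp (-w t y / h) * (-deriv (fun y => w t y) y / h) := by
    funext y
    exact ((hwx y).hasDerivAt.neg.div_const h).exp.deriv
  have hwt := ((hw.slice_left x).differentiable two_ne_zero t).hasDerivAt
  have hwxx := ((hw.slice_right t).differentiable_deriv_two x).hasDerivAt
  have ht : HasDerivAt (fun s => exp (-w s x / h))
      (exp (-w t x / h) * (-deriv (fun s => w s x) t / h)) t :=
    (hwt.neg.div_const h).exp
  have hxx : HasDerivAt (fun y => exp (-w t y / h) * (-deriv (fun y => w t y) y / h))
      (exp (-w t x / h) * (-deriv (fun y => w t y) x / h) * (-deriv (fun y => w t y) x / h)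
        + exp (-w t x / h) * (-deriv (deriv fun y => w t y) x / h)) x :=
    ((hwx x).hasDerivAt.neg.div_const h).exp.mul (hwxx.neg.div_const h)
  simp only [heatOp, burgersOp, hx, ht.deriv, hxx.deriv]
  field_simp
  ring

end ColeHopf

/-- Superposition principle for the integrated Burgers equation: if `w₁, w₂`
are `C²` solutions of `∂w/∂t + (1/2)(∂w/∂x)² − (h/2)·∂²w/∂x² = 0`, then for
any constants `λ₁, λ₂` the generalized linear combination
`w = (λ₁ ⊙ w₁) ⊕_h (λ₂ ⊙ w₂)`, i.e.
`w(t,x) = −h·ln(e^{−(λ₁+w₁(t,x))/h} + e^{−(λ₂+w₂(t,x))/h})`,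
is also a solution. -/
theorem burgers_superposition (h : ℝ) (hh : 0 < h) (w₁ w₂ : ℝ → ℝ → ℝ)
    (hw₁ : ContDiff ℝ 2 (fun p : ℝ × ℝ => w₁ p.1 p.2))
    (hw₂ : ContDiff ℝ 2 (fun p : ℝ × ℝ => w₂ p.1 p.2))
    (hb₁ : ∀ t x, deriv (fun s => w₁ s x) t
        + (1 / 2) * (deriv (fun y => w₁ t y) x) ^ 2
        - (h / 2) * deriv (deriv (fun y => w₁ t y)) x = 0)
    (hb₂ : ∀ t x, deriv (fun s => w₂ s x) t
        + (1 / 2) * (deriv (fun y => w₂ t y) x) ^ 2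
        - (h / 2) * deriv (deriv (fun y => w₂ t y)) x = 0)
    (l₁ l₂ : ℝ) (w : ℝ → ℝ → ℝ)
    (hw : ∀ t x, w t x = -h * Real.log
        (Real.exp (-(l₁ + w₁ t x) / h) + Real.exp (-(l₂ + w₂ t x) / h))) :
    ∀ t x, deriv (fun s => w s x) t
        + (1 / 2) * (deriv (fun y => w t y) x) ^ 2
        - (h / 2) * deriv (deriv (fun y => w t y)) x = 0 := by
  intro t x
  obtain rfl : w = fun t x => deformedAdd h (l₁ + w₁ t x) (l₂ + w₂ t x) := funext₂ hw
  have hw_smooth : ContDiff ℝ 2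
      (fun p : ℝ × ℝ => deformedAdd h (l₁ + w₁ p.1 p.2) (l₂ + w₂ p.1 p.2)) :=
    (contDiff_const.add hw₁).deformedAdd (contDiff_const.add hw₂)
  have hcole_hopf : (fun t x => exp (-deformedAdd h (l₁ + w₁ t x) (l₂ + w₂ t x) / h)) =
      fun t x => exp (-l₁ / h) * exp (-w₁ t x / h) + exp (-l₂ / h) * exp (-w₂ t x / h) := by
    funext t x
    rw [exp_neg_deformedAdd_div hh.ne', neg_add, neg_add, add_div, add_div, exp_add,
      exp_add]
  have hheat : heatOp h
      (fun t x => exp (-deformedAdd h (l₁ + w₁ t x) (l₂ + w₂ t x) / h)) t x = 0 := by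
    rw [hcole_hopf,
      heatOp_linear_combination (hw₁.neg.div_const h).exp (hw₂.neg.div_const h).exp,
      heatOp_exp_neg_div hh.ne' hw₁, heatOp_exp_neg_div hh.ne' hw₂]
    simp only [burgersOp, hb₁ t x, hb₂ t x, mul_zero, add_zero]
  rw [heatOp_exp_neg_div hh.ne' hw_smooth] at hheat
  exact (mul_eq_zero.mp hheat).resolve_left (neg_ne_zero.mpr (by positivity))
end

section
/- Let n ≥ 1 and let K be an n×n matrix over the semiring ℝ_min (equivalently, an endomorphism of the free semimodule (ℝ_min)ⁿ). Then K has an eigenvalue and a nontrivial eigenvector: there exist λ ∈ ℝ_min and a vector v ∈ (ℝ_min)ⁿ with v not equal to the zero vector (the vector all of whose entries are 𝟘 = +∞) such that K ⊙ v = λ ⊙ v, i.e. min_k ( K_{ik} + v_k ) = λ + v_i for every i. -/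
/-!
If some column of `K` is `𝟘`, the corresponding unit vector is an eigenvector for `𝟘`. Otherwise,
following a finite entry of each column backwards yields a closed walk of finite weight, so the
minimal mean weight `μ` of the closed walks of length at most `n` is finite. For `B = (-μ) ⊙ K`,
every such closed walk has weight `≥ 𝟙` and a critical one, through `i₀`, has weight `𝟙`. A walk of
length `n + 1` repeats a vertex, and cutting out the cycle does not increase its weight, so
`Bⁿ⁺¹ ≥ P := B ⊕ ⋯ ⊕ Bⁿ` and hence `B ⊕ B P = P`. As `P i₀ i₀ = 𝟙`, the column `P · i₀` is fixed by
`B`, i.e. it is an eigenvector of `K` for the eigenvalue `μ`.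
-/

open Finset Tropical Matrix Fintype

namespace Tropical

variable {R S : Type*} [LinearOrder R] [OrderTop R] {s : Finset S} {f : S → Tropical R}

theorem sum_le {j : S} (hj : j ∈ s) : ∑ i ∈ s, f i ≤ f j := by
  rw [← untrop_le_iff, Finset.untrop_sum']
  exact Finset.inf_le hj

theorem le_sum {x : Tropical R} (h : ∀ i ∈ s, x ≤ f i) : x ≤ ∑ i ∈ s, f i := by
  rw [← untrop_le_iff, Finset.untrop_sum']
  exact Finset.le_inf fun i hi => untrop_le_iff.2 (h i hi)

theorem exists_sum_eq (hs : s.Nonempty) (f : S → Tropical R) : ∃ j ∈ s, ∑ i ∈ s, f i = f j := by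
  obtain ⟨j, hj, hmin⟩ := s.exists_min_image f hs
  exact ⟨j, hj, le_antisymm (sum_le hj) (le_sum hmin)⟩

theorem trop_div_pow_eq {𝕜 : Type*} [Field 𝕜] [LinearOrder 𝕜] [IsStrictOrderedRing 𝕜]
    {x : Tropical (WithTop 𝕜)} (hx : x ≠ 0) (n : ℕ) :
    trop (((untrop x).untopD 0 / (n + 1) : 𝕜) : WithTop 𝕜) ^ (n + 1) = x := by
  obtain ⟨w, hw⟩ := WithTop.ne_top_iff_exists.1 fun h => hx (untrop_injective h)
  apply untrop_injective
  rw [untrop_pow, untrop_trop, ← hw, WithTop.untopD_coe, ← WithTop.coe_nsmul, nsmul_eq_mul]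
  congr 1
  field_simp
  push_cast
  ring

end Tropical

theorem Fintype.exists_lt_le_card_apply_eq {ι : Type*} [Fintype ι] (q : ℕ → ι) :
    ∃ a b, a < b ∧ b ≤ card ι ∧ q a = q b := by
  obtain ⟨x, y, hne, hxy⟩ :=
    Fintype.exists_ne_map_eq_of_card_lt (fun t : Fin (card ι + 1) => q t) (by simp)
  rcases Nat.lt_or_gt_of_ne (Fin.val_ne_of_ne hne) with h | h
  · exact ⟨x, y, h, Nat.lt_succ_iff.1 y.2, hxy⟩
  · exact ⟨y, x, h, Nat.lt_succ_iff.1 x.2, hxy.symm⟩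

namespace Matrix

section Walks

variable {R ι : Type*} [LinearOrderedAddCommMonoidWithTop R] (B : Matrix ι ι (Tropical R))

def walkWeight (q : ℕ → ι) (a b : ℕ) : Tropical R :=
  ∏ t ∈ Ico a b, B (q t) (q (t + 1))

theorem walkWeight_succ (q : ℕ → ι) {a b : ℕ} (hab : a ≤ b) :
    walkWeight B q a (b + 1) = walkWeight B q a b * B (q b) (q (b + 1)) :=
  prod_Ico_succ_top hab _

theorem walkWeight_mul_walkWeight (q : ℕ → ι) {a b c : ℕ} (hab : a ≤ b) (hbc : b ≤ c) :
    walkWeight B q a b * walkWeight B q b c = walkWeight B q a c :=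
  prod_Ico_consecutive _ hab hbc

variable [Fintype ι] [DecidableEq ι]

theorem pow_apply_le_walkWeight (q : ℕ → ι) {a b : ℕ} (hab : a ≤ b) :
    (B ^ (b - a)) (q a) (q b) ≤ walkWeight B q a b := by
  induction b, hab using Nat.le_induction with
  | base => simp [walkWeight]
  | succ b hab ih =>
    rw [Nat.sub_add_comm hab, pow_succ, mul_apply, walkWeight_succ B q hab]
    exact (sum_le (mem_univ (q b))).trans (mul_le_mul_left ih _)

theorem exists_walkWeight_eq_pow_apply (m : ℕ) (i j : ι) :
    ∃ q : ℕ → ι, q 0 = i ∧ q (m + 1) = j ∧ (B ^ (m + 1)) i j = walkWeight B q 0 (m + 1) := by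
  induction m generalizing j with
  | zero => exact ⟨fun t => if t = 0 then i else j, by simp, by simp, by simp [walkWeight]⟩
  | succ m ih =>
    obtain ⟨k, -, hk⟩ := exists_sum_eq (s := univ) ⟨i, mem_univ i⟩
      fun k => (B ^ (m + 1)) i k * B k j
    obtain ⟨q, hq₀, hqk, hq⟩ := ih k
    refine ⟨Function.update q (m + 2) j, by simp [hq₀], by simp, ?_⟩
    have hprefix :
        walkWeight B (Function.update q (m + 2) j) 0 (m + 1) = walkWeight B q 0 (m + 1) :=
      prod_congr rfl fun t ht => by
        have := (mem_Ico.1 ht).2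
        rw [Function.update_of_ne (by omega), Function.update_of_ne (by omega)]
    rw [pow_succ, mul_apply, hk, hq, walkWeight_succ B _ (m + 1).zero_le, hprefix,
      Function.update_of_ne (by omega), hqk, Function.update_self]

theorem sum_pow_apply_le_pow_card_succ_apply (hB : ∀ m < card ι, ∀ i, 1 ≤ (B ^ (m + 1)) i i)
    (i j : ι) : (∑ m ∈ range (card ι), B ^ (m + 1)) i j ≤ (B ^ (card ι + 1)) i j := by
  obtain ⟨q, rfl, rfl, hq⟩ := exists_walkWeight_eq_pow_apply B (card ι) i j
  obtain ⟨a, b, hab, hb, hqab⟩ := exists_lt_le_card_apply_eq q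
  have hcycle : 1 ≤ walkWeight B q a b := by
    have h := pow_apply_le_walkWeight B q hab.le
    rw [← hqab, show b - a = b - a - 1 + 1 by omega] at h
    exact (hB _ (by omega) _).trans h
  calc (∑ m ∈ range (card ι), B ^ (m + 1)) (q 0) (q (card ι + 1))
      ≤ (B ^ (a + (card ι + 1 - b))) (q 0) (q (card ι + 1)) := by
        rw [sum_apply, show a + (card ι + 1 - b) = a + card ι - b + 1 by omega]
        exact sum_le (mem_range.2 (by omega))
    _ ≤ (B ^ a) (q 0) (q a) * (B ^ (card ι + 1 - b)) (q b) (q (card ι + 1)) := by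
        rw [pow_add, mul_apply, hqab]
        exact sum_le (mem_univ _)
    _ ≤ walkWeight B q 0 a * walkWeight B q b (card ι + 1) :=
        mul_le_mul' (pow_apply_le_walkWeight B q a.zero_le) (pow_apply_le_walkWeight B q (by omega))
    _ ≤ walkWeight B q 0 a * walkWeight B q a b * walkWeight B q b (card ι + 1) := by
        gcongr
        exact le_mul_of_one_le_right' hcycle
    _ = (B ^ (card ι + 1)) (q 0) (q (card ι + 1)) := by
        rw [walkWeight_mul_walkWeight B q a.zero_le hab.le,
          walkWeight_mul_walkWeight B q b.zero_le (by omega), hq]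

theorem exists_mulVec_eq_self (hB : ∀ m < card ι, ∀ i, 1 ≤ (B ^ (m + 1)) i i) {c : ℕ}
    (hc : c < card ι) {i₀ : ι} (hcrit : (B ^ (c + 1)) i₀ i₀ = 1) :
    ∃ v : ι → Tropical R, v i₀ = 1 ∧ B *ᵥ v = v := by
  set P := ∑ m ∈ range (card ι), B ^ (m + 1) with hP_def
  have hP : P i₀ i₀ = 1 := by
    rw [hP_def, sum_apply]
    exact le_antisymm ((sum_le (mem_range.2 hc)).trans hcrit.le)
      (le_sum fun m hm => hB m (mem_range.1 hm) i₀)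
  have hclosure : B + B * P = P := by
    calc B + B * P = ∑ m ∈ range (card ι + 1), B ^ (m + 1) := by
          rw [sum_range_succ', mul_sum, add_comm]
          simp only [← pow_succ', zero_add, pow_one]
      _ = P := by
          ext i j
          rw [sum_range_succ, add_apply]
          exact add_eq_left (sum_pow_apply_le_pow_card_succ_apply B hB i j)
  refine ⟨fun j => P j i₀, hP, funext fun j => ?_⟩
  have hle : (B * P) j i₀ ≤ B j i₀ := by
    simpa [mul_apply, hP] using sum_le (f := fun k => B j k * P k i₀) (mem_univ i₀)
  have h := congrFun₂ hclosure j i₀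
  rwa [add_apply, add_eq_right hle] at h

end Walks

theorem exists_pow_apply_self_ne_zero {R ι : Type*} [AddCancelCommMonoid R] [LinearOrder R]
    [IsOrderedAddMonoid R] [Fintype ι] [DecidableEq ι] [Nonempty ι]
    (K : Matrix ι ι (Tropical (WithTop R))) (hK : ∀ j, ∃ i, K i j ≠ 0) :
    ∃ m < card ι, ∃ i, (K ^ (m + 1)) i i ≠ 0 := by
  choose g hg using hK
  -- `K (g j) j ≠ 0`, so iterating `g` is a walk of finite weight in `Kᵀ`.
  set q : ℕ → ι := fun t => g^[t] (Classical.arbitrary ι)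
  obtain ⟨a, b, hab, hb, hqab⟩ := exists_lt_le_card_apply_eq q
  have hwalk : walkWeight Kᵀ q a b ≠ 0 := prod_ne_zero_iff.2 fun t _ => by
    simpa [q, Function.iterate_succ_apply'] using hg (q t)
  refine ⟨b - a - 1, by omega, q a, fun h => hwalk (le_antisymm (le_zero _) ?_)⟩
  have hle := pow_apply_le_walkWeight Kᵀ q hab.le
  rwa [← hqab, show b - a = b - a - 1 + 1 by omega, ← transpose_pow, transpose_apply, h] at hle

section CycleMean

variable {𝕜 ι : Type*} [Field 𝕜] [LinearOrder 𝕜] [IsStrictOrderedRing 𝕜] [Fintype ι]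
  [DecidableEq ι] (K : Matrix ι ι (Tropical (WithTop 𝕜)))

theorem exists_pow_le_pow_apply_self (hK : ∃ m < card ι, ∃ i, (K ^ (m + 1)) i i ≠ 0) :
    ∃ μ : 𝕜, (∀ m < card ι, ∀ i, trop (μ : WithTop 𝕜) ^ (m + 1) ≤ (K ^ (m + 1)) i i) ∧
      ∃ c < card ι, ∃ i₀, (K ^ (c + 1)) i₀ i₀ = trop (μ : WithTop 𝕜) ^ (c + 1) := by
  set s := (range (card ι) ×ˢ univ).filter fun p : ℕ × ι => (K ^ (p.1 + 1)) p.2 p.2 ≠ 0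
  set mean : ℕ × ι → 𝕜 := fun p => (untrop ((K ^ (p.1 + 1)) p.2 p.2)).untopD 0 / (p.1 + 1)
  have hs : s.Nonempty := by
    obtain ⟨m, hm, i, hi⟩ := hK
    exact ⟨(m, i), by simp [s, hm, hi]⟩
  obtain ⟨⟨c, i₀⟩, hp, hmin⟩ := s.exists_min_image mean hs
  have hp' := mem_filter.1 hp
  refine ⟨mean (c, i₀), fun m hm i => ?_, c, (mem_product.1 hp'.1).1 |> mem_range.1, i₀,
    (trop_div_pow_eq hp'.2 c).symm⟩
  by_cases hi : (K ^ (m + 1)) i i = 0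
  · exact hi ▸ le_zero _
  · rw [← trop_div_pow_eq hi m]
    have hμ : mean (c, i₀) ≤ mean (m, i) := hmin (m, i) (by simp [s, hm, hi])
    exact pow_le_pow_left' (show trop _ ≤ trop _ from WithTop.coe_le_coe.2 hμ) _

theorem exists_mulVec_eq_smul_of_pow_apply_self_ne_zero
    (hK : ∃ m < card ι, ∃ i, (K ^ (m + 1)) i i ≠ 0) :
    ∃ (l : Tropical (WithTop 𝕜)) (v : ι → Tropical (WithTop 𝕜)), v ≠ 0 ∧ K *ᵥ v = l • v := by
  obtain ⟨μ, hcycle, c, hc, i₀, hcrit⟩ := exists_pow_le_pow_apply_self K hK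
  set t := trop (μ : WithTop 𝕜)
  set u := trop ((-μ : 𝕜) : WithTop 𝕜)
  have hut : u * t = 1 := by simp [u, t, ← untrop_inj_iff]
  have hcycle' : ∀ m < card ι, ∀ i, 1 ≤ ((u • K) ^ (m + 1)) i i := fun m hm i => by
    rw [smul_pow, smul_apply, smul_eq_mul]
    calc 1 = u ^ (m + 1) * t ^ (m + 1) := by rw [← mul_pow, hut, one_pow]
      _ ≤ u ^ (m + 1) * (K ^ (m + 1)) i i := mul_le_mul_right (hcycle m hm i) _
  have hcrit' : ((u • K) ^ (c + 1)) i₀ i₀ = 1 := by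
    rw [smul_pow, smul_apply, smul_eq_mul, hcrit, ← mul_pow, hut, one_pow]
  obtain ⟨v, hv₀, hv⟩ := exists_mulVec_eq_self (u • K) hcycle' hc hcrit'
  refine ⟨t, v, fun h => one_ne_zero (hv₀ ▸ congrFun h i₀), ?_⟩
  nth_rw 2 [← hv]
  rw [smul_mulVec, smul_smul, mul_comm t u, hut, one_smul]

end CycleMean

end Matrix

/-- Idempotent Perron–Frobenius: every `n × n` matrix (`n ≥ 1`) over the
semiring `ℝ_min = Tropical (WithTop ℝ)` has an eigenvalue `λ` and a nontrivial
eigenvector `v`: `v ≠ 0` and `(K ⊙ v)ᵢ = λ ⊙ vᵢ` for every `i`. -/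
theorem tropical_eigenvalue_exists {n : ℕ} (hn : 1 ≤ n)
    (K : Matrix (Fin n) (Fin n) (Tropical (WithTop ℝ))) :
    ∃ (l : Tropical (WithTop ℝ)) (v : Fin n → Tropical (WithTop ℝ)),
      v ≠ 0 ∧ ∀ i, K.mulVec v i = l * v i := by
  have : Nonempty (Fin n) := ⟨⟨0, hn⟩⟩
  by_cases hcol : ∃ j, ∀ i, K i j = 0
  · obtain ⟨j, hj⟩ := hcol
    refine ⟨0, Pi.single j 1, fun h => by simpa using congrFun h j, fun i => ?_⟩
    simp [hj]
  · push Not at hcol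
    obtain ⟨l, v, hv, hKv⟩ :=
      exists_mulVec_eq_smul_of_pow_apply_self_ne_zero K (exists_pow_apply_self_ne_zero K hcol)
    exact ⟨l, v, hv, fun i => congrFun hKv i⟩
end

section
/- Let n ≥ 1 and let K be an n×n matrix over the semiring ℝ_min that is irreducible: for all indices i, j there exists k ≥ 1 with (K^k)_{ij} ≠ 𝟘 (where 𝟘 = +∞). If λ₁, λ₂ ∈ ℝ_min are eigenvalues of K, i.e. there exist vectors v₁, v₂, each not equal to the zero vector, with K ⊙ v₁ = λ₁ ⊙ v₁ and K ⊙ v₂ = λ₂ ⊙ v₂, then λ₁ = λ₂: the eigenvalue of an irreducible matrix over ℝ_min is unique. -/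
/-!
An eigenvector `v` of an irreducible matrix has no entry equal to `𝟘`: if `v i = 𝟘`, then
`(K ^ k *ᵥ v) i = l ^ k * v i = 𝟘` forces `(K ^ k) i j * v j = 𝟘` for every `j`, and irreducibility
picks a `k` with `(K ^ k) i j ≠ 𝟘` for some `j` with `v j ≠ 𝟘`.

Finite entries are invertible, so for two eigenvectors with finite entries we may scale `v₁` by
`c = max_i v₂ i / v₁ i` to get `v₂ ≤ c • v₁` with equality at a maximising index `i₀`. Monotonicity
of `K *ᵥ ·` then gives `l₂ * v₂ i₀ ≤ l₁ * v₂ i₀`, hence `l₂ ≤ l₁`, and the converse by symmetry.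
-/

open Tropical Matrix Finset

theorem Matrix.pow_mulVec_eq_pow_smul {ι α : Type*} [Fintype ι] [DecidableEq ι] [CommSemiring α]
    {K : Matrix ι ι α} {l : α} {v : ι → α} (he : K *ᵥ v = l • v) (k : ℕ) :
    K ^ k *ᵥ v = l ^ k • v := by
  induction k with
  | zero => simp
  | succ k ih => rw [pow_succ', ← mulVec_mulVec, ih, mulVec_smul, he, smul_smul, ← pow_succ]

namespace Tropical

variable {R : Type*}

theorem sum_eq_zero_iff [LinearOrder R] [OrderTop R] {ι : Type*} {s : Finset ι}
    {f : ι → Tropical R} : ∑ i ∈ s, f i = 0 ↔ ∀ i ∈ s, f i = 0 := by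
  simp only [← untrop_inj_iff, Finset.untrop_sum', untrop_zero, Finset.inf_eq_top_iff,
    Function.comp_apply]

theorem mulVec_mono [LinearOrderedAddCommMonoidWithTop R] {m n : Type*} [Fintype n]
    (K : Matrix m n (Tropical R)) {u w : n → Tropical R} (h : u ≤ w) : K *ᵥ u ≤ K *ᵥ w :=
  fun _ => Finset.sum_le_sum fun j _ => mul_le_mul_right (h j) _

theorem eigenvector_apply_ne_zero [AddCancelCommMonoid R] [LinearOrder R] [IsOrderedAddMonoid R]
    {ι : Type*} [Fintype ι] [DecidableEq ι] {K : Matrix ι ι (Tropical (WithTop R))}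
    (hirr : ∀ i j, ∃ k : ℕ, (K ^ k) i j ≠ 0) {l : Tropical (WithTop R)}
    {v : ι → Tropical (WithTop R)} (hv : v ≠ 0) (he : K *ᵥ v = l • v) (i : ι) : v i ≠ 0 := by
  intro hi
  obtain ⟨j, hj⟩ := Function.ne_iff.mp hv
  obtain ⟨k, hk⟩ := hirr i j
  have hsum : ∑ m, (K ^ k) i m * v m = 0 := by
    simpa [hi, mulVec, dotProduct] using congrFun (pow_mulVec_eq_pow_smul he k) i
  exact mul_ne_zero hk hj (sum_eq_zero_iff.mp hsum j (mem_univ j))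

theorem exists_mul_eq_one_of_ne_zero [AddGroup R] {x : Tropical (WithTop R)} (hx : x ≠ 0) :
    ∃ y, y * x = 1 := by
  obtain ⟨a, ha⟩ := WithTop.ne_top_iff_exists.mp (untrop_injective.ne hx)
  refine ⟨trop ((-a : R) : WithTop R), untrop_injective ?_⟩
  rw [untrop_mul, untrop_trop, ← ha, ← WithTop.coe_add, neg_add_cancel, untrop_one,
    WithTop.coe_zero]

theorem le_of_mulVec_eq_smul_of_forall_ne_zero [AddCommGroup R] [LinearOrder R]
    [IsOrderedAddMonoid R] {ι : Type*} [Fintype ι] [Nonempty ι]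
    {K : Matrix ι ι (Tropical (WithTop R))} {l₁ l₂ : Tropical (WithTop R)}
    {v₁ v₂ : ι → Tropical (WithTop R)} (hv₁ : ∀ i, v₁ i ≠ 0) (hv₂ : ∀ i, v₂ i ≠ 0)
    (he₁ : K *ᵥ v₁ = l₁ • v₁) (he₂ : K *ᵥ v₂ = l₂ • v₂) : l₂ ≤ l₁ := by
  choose w₁ hw₁ using fun i => exists_mul_eq_one_of_ne_zero (hv₁ i)
  obtain ⟨i₀, -, hi₀⟩ := exists_max_image univ (fun i => v₂ i * w₁ i) univ_nonempty
  have hscale : ∀ i, v₂ i * w₁ i * v₁ i = v₂ i := fun i => by rw [mul_assoc, hw₁, mul_one]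
  have hle : v₂ ≤ (v₂ i₀ * w₁ i₀) • v₁ := fun i =>
    calc v₂ i = v₂ i * w₁ i * v₁ i := (hscale i).symm
      _ ≤ v₂ i₀ * w₁ i₀ * v₁ i := mul_le_mul_left (hi₀ i (mem_univ i)) _
  have hcmp : l₂ * v₂ i₀ ≤ l₁ * v₂ i₀ :=
    calc l₂ * v₂ i₀ = (K *ᵥ v₂) i₀ := by rw [he₂]; rfl
      _ ≤ (K *ᵥ ((v₂ i₀ * w₁ i₀) • v₁)) i₀ := mulVec_mono K hle i₀
      _ = l₁ * v₂ i₀ := by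
        rw [mulVec_smul, he₁, smul_smul, Pi.smul_apply, smul_eq_mul, mul_comm _ l₁, mul_assoc,
          hscale]
  obtain ⟨w₂, hw₂⟩ := exists_mul_eq_one_of_ne_zero (hv₂ i₀)
  simpa only [mul_assoc, mul_comm (v₂ i₀), hw₂, mul_one] using mul_le_mul_left hcmp w₂

end Tropical

theorem tropical_eigenvalue_unique_general {n : ℕ}
    (K : Matrix (Fin n) (Fin n) (Tropical (WithTop ℝ)))
    (hirr : ∀ i j, ∃ k : ℕ, 1 ≤ k ∧ (K ^ k) i j ≠ 0)
    (l₁ l₂ : Tropical (WithTop ℝ)) (v₁ v₂ : Fin n → Tropical (WithTop ℝ))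
    (hv₁ : v₁ ≠ 0) (hv₂ : v₂ ≠ 0)
    (he₁ : ∀ i, K.mulVec v₁ i = l₁ * v₁ i)
    (he₂ : ∀ i, K.mulVec v₂ i = l₂ * v₂ i) :
    l₁ = l₂ := by
  have hirr' : ∀ i j, ∃ k : ℕ, (K ^ k) i j ≠ 0 := fun i j => (hirr i j).imp fun _ => And.right
  replace he₁ : K *ᵥ v₁ = l₁ • v₁ := funext he₁
  replace he₂ : K *ᵥ v₂ = l₂ • v₂ := funext he₂
  have hfin₁ := eigenvector_apply_ne_zero hirr' hv₁ he₁
  have hfin₂ := eigenvector_apply_ne_zero hirr' hv₂ he₂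
  have : Nonempty (Fin n) := let ⟨j, _⟩ := Function.ne_iff.mp hv₁; ⟨j⟩
  exact le_antisymm (le_of_mulVec_eq_smul_of_forall_ne_zero hfin₂ hfin₁ he₂ he₁)
    (le_of_mulVec_eq_smul_of_forall_ne_zero hfin₁ hfin₂ he₁ he₂)

/-- Over the semiring `ℝ_min = Tropical (WithTop ℝ)`, the eigenvalue of an
irreducible matrix is unique: if `K` is irreducible (for all `i, j` some power
`K^k`, `k ≥ 1`, has `(K^k)_{ij} ≠ 𝟘`) and `λ₁, λ₂` are eigenvalues of `K`
with nontrivial eigenvectors, then `λ₁ = λ₂`. -/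
theorem tropical_eigenvalue_unique {n : ℕ} (hn : 1 ≤ n)
    (K : Matrix (Fin n) (Fin n) (Tropical (WithTop ℝ)))
    (hirr : ∀ i j, ∃ k : ℕ, 1 ≤ k ∧ (K ^ k) i j ≠ 0)
    (l₁ l₂ : Tropical (WithTop ℝ)) (v₁ v₂ : Fin n → Tropical (WithTop ℝ))
    (hv₁ : v₁ ≠ 0) (hv₂ : v₂ ≠ 0)
    (he₁ : ∀ i, K.mulVec v₁ i = l₁ * v₁ i)
    (he₂ : ∀ i, K.mulVec v₂ i = l₂ * v₂ i) :
    l₁ = l₂ :=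
  tropical_eigenvalue_unique_general K hirr l₁ l₂ v₁ v₂ hv₁ hv₂ he₁ he₂
end
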